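/- arXiv:1004.4396 — 3 statements merged into one kernel-verified Lean document; each statement's English description precedes it below -/
import Mathlib

section
/- For every integer k ≥ 1, setting ℓ_k := ⌊(3 + 2√2)^k / 4⌋ (the floor of the real number (3 + 2√2)^k / 4), there exists a natural number m_k with 2 m_k² = ℓ_k (ℓ_k + 1); that is, the triangular number ℓ_k(ℓ_k+1)/2 is a perfect square. -/
/-!
The powers `(3 + 2√2)^k = a + b√2` run through the solutions of the Pell equation `a² = 2b² + 1`.
The conjugate `a - b√2 = (a + b√2)⁻¹` lies in `(0, 1]`, so `(3 + 2√2)^k` is just below the even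
integer `2a`; as `a = 2ℓ + 1` is odd, `⌊(3 + 2√2)^k / 4⌋ = ℓ`. Substituting `a = 2ℓ + 1` and
`b = 2m` into the Pell equation gives `2m² = ℓ(ℓ + 1)`.
-/

def pellSqrtTwo : ℕ → ℕ × ℕ
  | 0 => (1, 0)
  | k + 1 => (3 * (pellSqrtTwo k).1 + 4 * (pellSqrtTwo k).2,
      2 * (pellSqrtTwo k).1 + 3 * (pellSqrtTwo k).2)

lemma pellSqrtTwo_add_mul_sqrt_two (k : ℕ) :
    ((pellSqrtTwo k).1 : ℝ) + (pellSqrtTwo k).2 * √2 = (3 + 2 * √2) ^ k := by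
  induction k with
  | zero => simp [pellSqrtTwo]
  | succ k ih =>
    have hsq : √2 ^ 2 = 2 := Real.sq_sqrt zero_le_two
    rw [pow_succ, ← ih, pellSqrtTwo]
    push_cast
    linear_combination (-2 * ((pellSqrtTwo k).2 : ℝ)) * hsq

lemma pellSqrtTwo_sq (k : ℕ) : (pellSqrtTwo k).1 ^ 2 = 2 * (pellSqrtTwo k).2 ^ 2 + 1 := by
  induction k with
  | zero => simp [pellSqrtTwo]
  | succ k ih =>
    rw [pellSqrtTwo]
    linear_combination ih

section PellSqrtTwo

variable {a b : ℕ}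

lemma floor_add_mul_sqrt_two_div_four (h : a ^ 2 = 2 * b ^ 2 + 1) :
    ⌊(a + b * √2) / 4⌋ = ((a / 2 : ℕ) : ℤ) := by
  obtain ⟨ℓ, rfl⟩ : Odd a := (Nat.odd_pow_iff two_ne_zero).1 ⟨b ^ 2, by rw [h]⟩
  have hsq : √2 ^ 2 = 2 := Real.sq_sqrt zero_le_two
  have hpell : ((2 * ℓ + 1 : ℕ) : ℝ) ^ 2 = 2 * (b : ℝ) ^ 2 + 1 := by exact_mod_cast h
  rw [show (2 * ℓ + 1) / 2 = ℓ by omega]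
  push_cast at hpell ⊢
  have hconj : (2 * ℓ + 1 - b * √2) * (2 * ℓ + 1 + b * √2) = (1 : ℝ) := by
    linear_combination hpell - (b : ℝ) ^ 2 * hsq
  have hX : (1 : ℝ) ≤ 2 * ℓ + 1 + b * √2 := by
    have : (0 : ℝ) ≤ b * √2 := by positivity
    linarith
  have hconj_pos : (0 : ℝ) < 2 * ℓ + 1 - b * √2 :=
    pos_of_mul_pos_left (hconj ▸ one_pos) (by linarith)
  have hconj_le : (2 * ℓ + 1 - b * √2 : ℝ) ≤ 1 := by nlinarith
  rw [Int.floor_eq_iff]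
  constructor <;> push_cast <;> linarith

lemma two_mul_half_sq_eq_half_mul_succ (h : a ^ 2 = 2 * b ^ 2 + 1) :
    2 * (b / 2) ^ 2 = a / 2 * (a / 2 + 1) := by
  obtain ⟨ℓ, rfl⟩ : Odd a := (Nat.odd_pow_iff two_ne_zero).1 ⟨b ^ 2, by rw [h]⟩
  obtain ⟨m, rfl⟩ : Even b :=
    (Nat.even_pow' two_ne_zero).1 ⟨ℓ * (ℓ + 1), by nlinarith⟩
  rw [show (2 * ℓ + 1) / 2 = ℓ by omega, show (m + m) / 2 = m by omega]
  nlinarith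

end PellSqrtTwo

theorem stmt_4_general (k : ℕ) :
    ∃ m : ℕ, 2 * (m : ℤ) ^ 2 =
      ⌊(3 + 2 * Real.sqrt 2) ^ k / 4⌋ * (⌊(3 + 2 * Real.sqrt 2) ^ k / 4⌋ + 1) := by
  have hpell := pellSqrtTwo_sq k
  rw [← pellSqrtTwo_add_mul_sqrt_two, floor_add_mul_sqrt_two_div_four hpell]
  exact ⟨(pellSqrtTwo k).2 / 2, by exact_mod_cast two_mul_half_sq_eq_half_mul_succ hpell⟩

/-- For every integer `k ≥ 1`, with `ℓ_k = ⌊(3 + 2√2)^k / 4⌋`, the triangular number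
`ℓ_k(ℓ_k+1)/2` is a perfect square: there is `m ∈ ℕ` with `2m² = ℓ_k(ℓ_k+1)`. -/
theorem stmt_4 (k : ℕ) (hk : 1 ≤ k) :
    ∃ m : ℕ, 2 * (m : ℤ) ^ 2 =
      ⌊(3 + 2 * Real.sqrt 2) ^ k / 4⌋ * (⌊(3 + 2 * Real.sqrt 2) ^ k / 4⌋ + 1) :=
  stmt_4_general k
end

section
/- Let ℓ be a real number with 2ℓ a positive integer, and let n be a real number with ℓ − n ∈ ℤ and −ℓ ≤ n ≤ ℓ. Then ℓ(ℓ+1) − (n−1)² ≠ 0, and ℓ · (ℓ+n) · (ℓ−n+1) ≤ 2 · (ℓ(ℓ+1) − (n−1)²)². Equivalently, the nonzero entries √((ℓ+n)(ℓ−n+1)) / ((n−1)² − ℓ(ℓ+1)) of the matrix σ_{ℒ_s}⁻¹ Δ₁₂ σ_{ℒ_s} appearing in the sub-elliptic estimate for the sub-Laplacian on SU(2) are bounded in absolute value by √(2/ℓ). -/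
/-!
Write `p = ℓ + n` and `q = ℓ - n + 1`, so that `p + q = 2ℓ + 1` and
`ℓ(ℓ+1) - (n-1)² = ℓ + (p-1)q`. Since `p` is a non-negative integer, either `p = 0`, where the
left side of the inequality vanishes and the denominator is `-(ℓ+1)`, or `p ≥ 1`, where the
denominator `D` is at least `ℓ > 0` and `2D² ≥ 2ℓD = ℓpq + ℓ(p-1)(q+1) ≥ ℓpq`.
-/

lemma eq_zero_or_one_le_of_eq_intCast {x : ℝ} {k : ℤ} (hx : x = k) (h0 : 0 ≤ x) :
    x = 0 ∨ 1 ≤ x := by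
  subst hx
  have hk : 0 ≤ k := by exact_mod_cast h0
  rcases hk.eq_or_lt with rfl | hk
  · exact Or.inl Int.cast_zero
  · exact Or.inr (by exact_mod_cast hk)

lemma casimir_sub_sq_eq (ℓ n : ℝ) :
    ℓ * (ℓ + 1) - (n - 1) ^ 2 = ℓ + (ℓ + n - 1) * (ℓ - n + 1) := by
  ring

lemma le_casimir_sub_sq {ℓ n : ℝ} (h₁ : 1 ≤ ℓ + n) (h₂ : n ≤ ℓ + 1) :
    ℓ ≤ ℓ * (ℓ + 1) - (n - 1) ^ 2 := by
  rw [casimir_sub_sq_eq]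
  have : 0 ≤ (ℓ + n - 1) * (ℓ - n + 1) := mul_nonneg (by linarith) (by linarith)
  linarith

lemma mul_le_two_mul_casimir_sub_sq_sq {ℓ n : ℝ} (hℓ : 0 ≤ ℓ) (h₁ : 1 ≤ ℓ + n)
    (h₂ : n ≤ ℓ + 1) :
    ℓ * ((ℓ + n) * (ℓ - n + 1)) ≤ 2 * (ℓ * (ℓ + 1) - (n - 1) ^ 2) ^ 2 := by
  set D := ℓ * (ℓ + 1) - (n - 1) ^ 2 with hD
  have hℓD : ℓ ≤ D := le_casimir_sub_sq h₁ h₂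
  calc ℓ * ((ℓ + n) * (ℓ - n + 1))
      ≤ ℓ * ((ℓ + n) * (ℓ - n + 1)) + ℓ * ((ℓ + n - 1) * (ℓ - n + 2)) := by
        exact le_add_of_nonneg_right
          (mul_nonneg hℓ (mul_nonneg (by linarith) (by linarith)))
    _ = 2 * ℓ * D := by rw [hD]; ring
    _ ≤ 2 * D * D := by gcongr; linarith
    _ = 2 * D ^ 2 := by ring

/-- For `2ℓ` a positive integer and an index `n` with `ℓ − n ∈ ℤ`, `−ℓ ≤ n ≤ ℓ`, one has
`ℓ(ℓ+1) − (n−1)² ≠ 0` and `ℓ(ℓ+n)(ℓ−n+1) ≤ 2(ℓ(ℓ+1) − (n−1)²)²`, i.e. the entries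
`√((ℓ+n)(ℓ−n+1)) / ((n−1)² − ℓ(ℓ+1))` of `σ_{ℒ_s}⁻¹ Δ₁₂ σ_{ℒ_s}` are bounded by `√(2/ℓ)`. -/
theorem stmt_6 (ℓ n : ℝ) (a : ℤ) (ha : 0 < a) (hℓ : 2 * ℓ = (a : ℝ))
    (b : ℤ) (hn : ℓ - n = (b : ℝ)) (hn1 : -ℓ ≤ n) (hn2 : n ≤ ℓ) :
    ℓ * (ℓ + 1) - (n - 1) ^ 2 ≠ 0 ∧
      ℓ * ((ℓ + n) * (ℓ - n + 1)) ≤ 2 * (ℓ * (ℓ + 1) - (n - 1) ^ 2) ^ 2 := by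
  have hℓ0 : 0 < ℓ := by
    have : (0 : ℝ) < a := by exact_mod_cast ha
    linarith
  have hp : ℓ + n = ((a - b : ℤ) : ℝ) := by push_cast; linarith
  rcases eq_zero_or_one_le_of_eq_intCast hp (by linarith) with hp0 | hp1
  · have hD : ℓ * (ℓ + 1) - (n - 1) ^ 2 = -(ℓ + 1) := by
      rw [show n = -ℓ by linarith]; ring
    refine ⟨by rw [hD]; linarith, ?_⟩
    rw [hp0, zero_mul, mul_zero]
    positivity
  · exact ⟨(hℓ0.trans_le (le_casimir_sub_sq hp1 (by linarith))).ne',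
      mul_le_two_mul_casimir_sub_sq_sq hℓ0.le hp1 (by linarith)⟩
end

section
/- Let k ≥ 1 be an integer and c ∈ ℂ, and suppose that (−i m)^k + c ≠ 0 for every half-integer m (i.e., for every m = j/2 with j ∈ ℤ). Then there exists ε > 0 such that |(−i m)^k + c| ≥ ε for every half-integer m. In other words, if the diagonal symbol of ∂_X^k + c on SU(2), with entries (−i m)^k + c, is everywhere nonsingular, then its inverse is uniformly bounded; equivalently, ∂_X^k + c is globally hypoelliptic precisely when c ∉ −(−i)^k · {2^{−k} l^k : l ∈ ℤ}. -/
/-! A nonconstant polynomial has norm tending to infinity, and `j / 2` leaves every bounded set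
as `j` leaves every finite set of integers. So `‖(-i j / 2) ^ k + c‖` tends to infinity along
the cofinite filter, hence attains its minimum over `ℤ`, which is positive by hypothesis. -/

open Filter Polynomial

theorem Filter.Tendsto.exists_lt_forall_le {α β : Type*} [Nonempty α] [LinearOrder β]
    {f : α → β} {b : β} (hf : Tendsto f cofinite atTop) (hb : ∀ a, b < f a) :
    ∃ ε, b < ε ∧ ∀ a, ε ≤ f a :=
  let ⟨a₀, ha₀⟩ := hf.exists_forall_le
  ⟨f a₀, hb a₀, ha₀⟩

theorem tendsto_norm_pow_add_atTop {α 𝕜 : Type*} [NormedField 𝕜] {k : ℕ} (hk : 1 ≤ k) (c : 𝕜)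
    {l : Filter α} {z : α → 𝕜} (hz : Tendsto (fun x => ‖z x‖) l atTop) :
    Tendsto (fun x => ‖z x ^ k + c‖) l atTop := by
  have hdeg : 0 < degree (X ^ k + C c : 𝕜[X]) := by
    rw [degree_X_pow_add_C (by omega)]
    exact_mod_cast hk
  refine ((X ^ k + C c).tendsto_norm_atTop hdeg hz).congr fun x => ?_
  simp

theorem tendsto_norm_neg_I_mul_half_cofinite :
    Tendsto (fun j : ℤ => ‖-Complex.I * ((j : ℂ) / 2)‖) cofinite atTop := by
  have hint : Tendsto (fun j : ℤ => ‖j‖) cofinite atTop := by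
    simpa [cocompact_eq_cofinite] using tendsto_norm_cocompact_atTop (E := ℤ)
  simpa [Int.norm_eq_abs] using hint.atTop_div_const (r := 2) two_pos

/-- Let `k ≥ 1` and `c ∈ ℂ` with `(−i m)^k + c ≠ 0` for every half-integer `m = j/2`.
Then there exists `ε > 0` with `|(−i m)^k + c| ≥ ε` for all half-integers `m`; i.e. the
everywhere-nonsingular diagonal symbol of `∂_X^k + c` on SU(2) has uniformly bounded
inverse. -/
theorem stmt_9 (k : ℕ) (hk : 1 ≤ k) (c : ℂ)
    (hc : ∀ j : ℤ, (-Complex.I * ((j : ℂ) / 2)) ^ k + c ≠ 0) :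
    ∃ ε : ℝ, 0 < ε ∧
      ∀ j : ℤ, ε ≤ ‖(-Complex.I * ((j : ℂ) / 2)) ^ k + c‖ :=
  (tendsto_norm_pow_add_atTop hk c tendsto_norm_neg_I_mul_half_cofinite).exists_lt_forall_le
    fun j => norm_pos_iff.2 (hc j)
end
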